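/- Under the bistable Solow–Swan hypotheses, the smallest perturbation of the equilibrium E that does not return to E has size exactly E − E₁ (the shape-of-basin measure satisfies 𝒟 = E − E₁): every solution with initial condition x₀ ≥ 0 satisfying |x₀ − E| < E − E₁ converges to E, while the constant function x ≡ E₁ is a solution with |E₁ − E| = E − E₁ that does not converge to E. -/

import Mathlib

/-!
Write `G z = F z - C z`. Since `G > 0` on `(E₁, E)` and `G < 0` on `(E, ∞)`, a solution starting at
`x₀ ∈ (E₁, 2E - E₁)` is trapped in a compact interval `[c, d] ⊆ (E₁, ∞)` around `E` whose endpoints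
are fences: `G c > 0`, `G d < 0`. On that interval `(z - E) G z < 0` away from `E`, so `(x - E)²` is
a Lyapunov function; by compactness it decreases at a uniform rate while `x` stays `ε`-away from
`E`, which forces `x → E`.
-/

open Set Filter Topology

def IsForwardSolution (G x : ℝ → ℝ) : Prop :=
  ∀ t : ℝ, 0 ≤ t → HasDerivAt x (G (x t)) t

lemma sub_le_mul_sub_of_hasDerivAt_le {W W' : ℝ → ℝ} {a : ℝ}
    (hW : ∀ t : ℝ, 0 ≤ t → HasDerivAt W (W' t) t) (hle : ∀ t : ℝ, 0 < t → W' t ≤ a)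
    {s t : ℝ} (hs : 0 ≤ s) (hst : s ≤ t) : W t - W s ≤ a * (t - s) := by
  refine (convex_Ici 0).image_sub_le_mul_sub_of_deriv_le
    (fun r hr => (hW r hr).continuousAt.continuousWithinAt) ?_ ?_ s hs t (hs.trans hst) hst
  · rw [interior_Ici]
    exact fun r hr => (hW r (le_of_lt hr)).differentiableAt.differentiableWithinAt
  · rw [interior_Ici]
    exact fun r hr => (hW r (le_of_lt hr)).deriv ▸ hle r hr

namespace IsForwardSolution

variable {G x : ℝ → ℝ}

lemma const_le_of_pos (hx : IsForwardSolution G x) {c : ℝ} (hc : 0 < G c) (h0 : c ≤ x 0)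
    {t : ℝ} (ht : 0 ≤ t) : c ≤ x t :=
  image_le_of_deriv_right_lt_deriv_boundary' continuousOn_const
    (fun _ _ => hasDerivWithinAt_const _ _ c) h0
    (fun s hs => (hx s hs.1).continuousAt.continuousWithinAt)
    (fun s hs => (hx s hs.1).hasDerivWithinAt) (fun _ _ hs => hs ▸ hc) ⟨ht, le_rfl⟩

lemma le_const_of_neg (hx : IsForwardSolution G x) {d : ℝ} (hd : G d < 0) (h0 : x 0 ≤ d)
    {t : ℝ} (ht : 0 ≤ t) : x t ≤ d :=
  image_le_of_deriv_right_lt_deriv_boundary'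
    (fun s hs => (hx s hs.1).continuousAt.continuousWithinAt)
    (fun s hs => (hx s hs.1).hasDerivWithinAt) h0 continuousOn_const
    (fun _ _ => hasDerivWithinAt_const _ _ d) (fun _ _ hs => hs ▸ hd) ⟨ht, le_rfl⟩

section Lyapunov

variable {K : Set ℝ} {E : ℝ}

lemma hasDerivAt_sub_sq (hx : IsForwardSolution G x) {t : ℝ} (ht : 0 ≤ t) :
    HasDerivAt (fun s => (x s - E) ^ 2) (2 * ((x t - E) * G (x t))) t :=
  ((hx t ht).sub_const E).fun_pow 2 |>.congr_deriv (by norm_num; ring)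

lemma exists_abs_sub_lt (hx : IsForwardSolution G x) (hK : IsCompact K) (hG : ContinuousOn G K)
    (hsign : ∀ z ∈ K, z ≠ E → (z - E) * G z < 0) (hmem : ∀ t : ℝ, 0 ≤ t → x t ∈ K)
    {ε : ℝ} (hε : 0 < ε) : ∃ t₀, 0 ≤ t₀ ∧ |x t₀ - E| < ε := by
  by_contra! hfar
  set K' := K ∩ {z | ε ≤ |z - E|}
  have hK' : IsCompact K' :=
    hK.inter_right (isClosed_le continuous_const (continuous_id.sub continuous_const).abs)
  have hsign' : ∀ z ∈ K', 0 < -((z - E) * G z) := fun z hz =>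
    neg_pos.2 (hsign z hz.1 fun h => hε.not_ge (by simpa [h] using hz.2))
  obtain ⟨δ, hδ, hδle⟩ := hK'.exists_forall_le' (f := fun z => -((z - E) * G z))
    (((continuousOn_id.sub continuousOn_const).mul (hG.mono inter_subset_left)).neg) hsign'
  have hrate : ∀ t : ℝ, 0 < t → 2 * ((x t - E) * G (x t)) ≤ -(2 * δ) := fun t ht => by
    linarith [hδle (x t) ⟨hmem t ht.le, hfar t ht.le⟩]
  -- decreasing at rate `2δ`, the square would be negative by time `T`
  set T := (x 0 - E) ^ 2 / (2 * δ) + 1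
  have hT : 0 ≤ T := by positivity
  have hdecay := sub_le_mul_sub_of_hasDerivAt_le (fun t ht => hx.hasDerivAt_sub_sq ht) hrate
    le_rfl hT
  have hδT : 2 * δ * T = (x 0 - E) ^ 2 + 2 * δ := by simp only [T]; field_simp
  nlinarith [sq_nonneg (x T - E)]

lemma tendsto_of_isCompact (hx : IsForwardSolution G x) (hK : IsCompact K)
    (hG : ContinuousOn G K) (hsign : ∀ z ∈ K, z ≠ E → (z - E) * G z < 0)
    (hmem : ∀ t : ℝ, 0 ≤ t → x t ∈ K) : Tendsto x atTop (𝓝 E) := by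
  have hderiv_nonpos : ∀ t : ℝ, 0 < t → 2 * ((x t - E) * G (x t)) ≤ 0 := fun t ht => by
    rcases eq_or_ne (x t) E with h | h
    · simp [h]
    · linarith [hsign (x t) (hmem t ht.le) h]
  rw [Metric.tendsto_atTop]
  intro ε hε
  obtain ⟨t₀, ht₀, hnear⟩ := hx.exists_abs_sub_lt hK hG hsign hmem hε
  refine ⟨t₀, fun t ht => ?_⟩
  have hmono := sub_le_mul_sub_of_hasDerivAt_le (fun t ht => hx.hasDerivAt_sub_sq ht)
    hderiv_nonpos ht₀ ht
  rw [Real.dist_eq]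
  refine abs_lt_of_sq_lt_sq ?_ hε.le
  calc (x t - E) ^ 2 ≤ (x t₀ - E) ^ 2 := by linarith
    _ = |x t₀ - E| ^ 2 := (sq_abs _).symm
    _ < ε ^ 2 := by gcongr

end Lyapunov

end IsForwardSolution

lemma solow_swan_lyapunov_sign {F : ℝ → ℝ} {C E₁ E : ℝ}
    (hgt : ∀ z ∈ Ioo E₁ E, C * z < F z) (hlt : ∀ z : ℝ, E < z → F z < C * z)
    {z : ℝ} (hz : E₁ < z) (hzE : z ≠ E) : (z - E) * (F z - C * z) < 0 := by
  rcases hzE.lt_or_gt with h | h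
  · exact mul_neg_of_neg_of_pos (sub_neg.2 h) (sub_pos.2 (hgt z ⟨hz, h⟩))
  · exact mul_neg_of_pos_of_neg (sub_pos.2 h) (sub_neg.2 (hlt z h))

theorem solow_swan_shape_of_basin_general
    (F : ℝ → ℝ) (C E₁ E : ℝ)
    (hF : LocallyLipschitz F)
    (hE₁E : E₁ < E)
    (hE₁eq : F E₁ = C * E₁)
    (hgt : ∀ z ∈ Set.Ioo E₁ E, C * z < F z)
    (hlt : ∀ z : ℝ, E < z → F z < C * z) :
    (∀ x₀ : ℝ, 0 ≤ x₀ → |x₀ - E| < E - E₁ →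
      ∀ x : ℝ → ℝ, x 0 = x₀ →
        (∀ t : ℝ, 0 ≤ t → HasDerivAt x (F (x t) - C * x t) t) →
        Filter.Tendsto x Filter.atTop (nhds E)) ∧
    ((fun _ : ℝ => E₁) 0 = E₁ ∧
      (∀ t : ℝ, 0 ≤ t →
        HasDerivAt (fun _ : ℝ => E₁) (F ((fun _ : ℝ => E₁) t) - C * (fun _ : ℝ => E₁) t) t) ∧
      |E₁ - E| = E - E₁ ∧
      ¬ Filter.Tendsto (fun _ : ℝ => E₁) Filter.atTop (nhds E)) := by
  refine ⟨fun x₀ _ hx₀ x hx0 (hx : IsForwardSolution (fun z => F z - C * z) x) => ?_, rfl,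
    fun t _ => ?_, ?_, ?_⟩
  · have hE₁x₀ : E₁ < x₀ := by linarith [(abs_sub_lt_iff.mp hx₀).2]
    set c := min x₀ ((E₁ + E) / 2)
    set d := max x₀ (E + 1)
    have hE₁c : E₁ < c := lt_min hE₁x₀ (by linarith)
    have hcE : c < E := (min_le_right _ _).trans_lt (by linarith)
    have hEd : E < d := (lt_add_one E).trans_le (le_max_right _ _)
    have hmem : ∀ t : ℝ, 0 ≤ t → x t ∈ Icc c d := fun t ht =>
      ⟨hx.const_le_of_pos (by linarith [hgt c ⟨hE₁c, hcE⟩]) (hx0 ▸ min_le_left _ _) ht,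
        hx.le_const_of_neg (by linarith [hlt d hEd]) (hx0 ▸ le_max_left _ _) ht⟩
    exact hx.tendsto_of_isCompact isCompact_Icc
      (hF.continuous.sub (continuous_const_mul C)).continuousOn
      (fun z hz => solow_swan_lyapunov_sign hgt hlt (hE₁c.trans_le hz.1)) hmem
  · simpa [hE₁eq] using hasDerivAt_const t E₁
  · rw [abs_sub_comm, abs_of_pos (sub_pos.2 hE₁E)]
  · exact fun h => hE₁E.ne (tendsto_nhds_unique tendsto_const_nhds h)

/-- Under the bistable Solow–Swan hypotheses, the shape-of-basin measure of the
safe equilibrium `E` equals `E - E₁`: every solution whose initial condition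
`x₀ ≥ 0` satisfies `|x₀ - E| < E - E₁` converges to `E`, while the constant
function `x ≡ E₁` is a solution with `|E₁ - E| = E - E₁` that does not converge
to `E`. -/
theorem solow_swan_shape_of_basin
    (F : ℝ → ℝ) (C E₁ E : ℝ) (hC : 0 < C)
    (hF : LocallyLipschitz F) (hF0 : F 0 = 0)
    (hE₁ : 0 < E₁) (hE₁E : E₁ < E)
    (hE₁eq : F E₁ = C * E₁) (hEeq : F E = C * E)
    (hlt₁ : ∀ z ∈ Set.Ioo (0 : ℝ) E₁, F z < C * z)
    (hgt : ∀ z ∈ Set.Ioo E₁ E, C * z < F z)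
    (hlt : ∀ z : ℝ, E < z → F z < C * z) :
    (∀ x₀ : ℝ, 0 ≤ x₀ → |x₀ - E| < E - E₁ →
      ∀ x : ℝ → ℝ, x 0 = x₀ →
        (∀ t : ℝ, 0 ≤ t → HasDerivAt x (F (x t) - C * x t) t) →
        Filter.Tendsto x Filter.atTop (nhds E)) ∧
    ((fun _ : ℝ => E₁) 0 = E₁ ∧
      (∀ t : ℝ, 0 ≤ t →
        HasDerivAt (fun _ : ℝ => E₁) (F ((fun _ : ℝ => E₁) t) - C * (fun _ : ℝ => E₁) t) t) ∧
      |E₁ - E| = E - E₁ ∧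
      ¬ Filter.Tendsto (fun _ : ℝ => E₁) Filter.atTop (nhds E)) :=
  solow_swan_shape_of_basin_general F C E₁ E hF hE₁E hE₁eq hgt hlt
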